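/- (Generalized coefficient-estimation identity, used in Appendix E.) Let ℰ be any linear map on 2^n × 2^n complex matrices. Then for all Pauli strings P_a and P_b, the uniform average over the 6^n n-fold product Pauli eigenstates ρ satisfies 6^{-n} ∑_ρ tr(P_b * ℰ(ρ)) · tr(P_a * ρ) = (1/3)^{|a|} · 2^{-n} · tr(P_b * ℰ(P_a)), where |a| is the number of indices j with a j ≠ 0. -/

import Mathlib

open Matrix Finset

noncomputable section

/-- The four single-qubit Pauli matrices: σ₀ = I, σ₁ = X, σ₂ = Y, σ₃ = Z. -/
def pauli : Fin 4 → Matrix (Fin 2) (Fin 2) ℂ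
  | 0 => 1
  | 1 => !![0, 1; 1, 0]
  | 2 => !![0, -Complex.I; Complex.I, 0]
  | 3 => !![1, 0; 0, -1]

/-- The `n`-qubit Pauli string `P_a = σ_{a 1} ⊗ ⋯ ⊗ σ_{a n}` (n-fold Kronecker product),
a `2^n × 2^n` complex matrix indexed by `Fin n → Fin 2`. -/
def PauliString {n : ℕ} (a : Fin n → Fin 4) :
    Matrix (Fin n → Fin 2) (Fin n → Fin 2) ℂ :=
  fun i k => ∏ j, pauli (a j) (i j) (k j)

/-- `⟨a,b⟩ ∈ {0,1}`: parity of the number of positions where `a` and `b` anticommute. -/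
def ppair {n : ℕ} (a b : Fin n → Fin 4) : ℕ :=
  (Finset.univ.filter fun j => a j ≠ 0 ∧ b j ≠ 0 ∧ a j ≠ b j).card % 2

/-- The weight `|a|` of a Pauli string: the number of non-identity tensor factors. -/
def pweight {n : ℕ} (a : Fin n → Fin 4) : ℕ :=
  (Finset.univ.filter fun j => a j ≠ 0).card

/-- The six single-qubit Pauli eigenstates `(I₂ + s•W)/2`, `s ∈ {1,-1}`, `W ∈ {X,Y,Z}`,
indexed by `Bool × Fin 3`. -/
def eigState : Bool × Fin 3 → Matrix (Fin 2) (Fin 2) ℂ :=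
  fun q => (2⁻¹ : ℂ) • (1 + (if q.1 then (1 : ℂ) else -1) • pauli q.2.succ)

/-- The `6^n` n-fold product Pauli eigenstates `ρ₁ ⊗ ⋯ ⊗ ρ_n` with each `ρ_j ∈ S₁`. -/
def prodEigState {n : ℕ} (f : Fin n → Bool × Fin 3) :
    Matrix (Fin n → Fin 2) (Fin n → Fin 2) ℂ :=
  fun i k => ∏ j, eigState (f j) (i j) (k j)

/-!
Both the Pauli strings and the product eigenstates are Kronecker products over the qubits, so the
trace pairing `tr(P_a ρ)` factorises and the average `∑_ρ tr(P_a ρ) ρ` factorises into single-qubit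
averages. On one qubit, `tr(σ_c ρ_{s,W}) = δ_{c,0} + s δ_{c,W}`, and summing over the six
eigenstates gives `∑_q tr(σ_c ρ_q) ρ_q = 3 I` for `c = 0` and `= σ_c` otherwise. Hence
`∑_ρ tr(P_a ρ) ρ = 3^{n - |a|} P_a`; applying `M ↦ tr(P_b ℰ(M))`, which is linear, and dividing by
`6^n = 2^n 3^n` gives the identity.
-/

namespace Matrix

variable {ι m n κ R : Type*} [Fintype ι]

def piKronecker [CommMonoid R] (A : ι → Matrix m n R) : Matrix (ι → m) (ι → n) R :=
  of fun i k => ∏ j, A j (i j) (k j)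

theorem piKronecker_smul [CommMonoid R] (c : ι → R) (A : ι → Matrix m n R) :
    piKronecker (fun j => c j • A j) = (∏ j, c j) • piKronecker A := by
  ext i k
  simp only [piKronecker, of_apply, smul_apply, smul_eq_mul, Finset.prod_mul_distrib]

variable [DecidableEq ι] [CommSemiring R]

theorem trace_piKronecker_mul [Fintype m] [Fintype n] (A : ι → Matrix m n R)
    (B : ι → Matrix n m R) :
    (piKronecker A * piKronecker B).trace = ∏ j, (A j * B j).trace := by
  simp only [trace, diag, mul_apply, piKronecker, of_apply, ← Finset.prod_mul_distrib,
    Fintype.prod_sum]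

theorem sum_smul_piKronecker [Fintype κ] (c : ι → κ → R) (M : ι → κ → Matrix m n R) :
    ∑ f : ι → κ, (∏ j, c j (f j)) • piKronecker (fun j => M j (f j))
      = piKronecker (fun j => ∑ q, c j q • M j q) := by
  ext i k
  simp only [sum_apply, smul_apply, piKronecker, of_apply, smul_eq_mul, ← Finset.prod_mul_distrib,
    Fintype.prod_sum]

end Matrix

@[simp] theorem pauli_zero : pauli 0 = 1 := rfl

theorem trace_pauli_mul_pauli (c d : Fin 4) :
    (pauli c * pauli d).trace = if c = d then 2 else 0 := by
  fin_cases c <;> fin_cases d <;>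
    simp [pauli, trace, Fin.sum_univ_two, one_apply] <;> norm_num

theorem trace_pauli_mul_eigState (c : Fin 4) (s : Bool) (w : Fin 3) :
    (pauli c * eigState (s, w)).trace
      = (if c = 0 then 1 else 0) + (if s then 1 else -1) * (if c = w.succ then 1 else 0) := by
  have trace_pauli := trace_pauli_mul_pauli c 0
  rw [pauli_zero, Matrix.mul_one] at trace_pauli
  simp only [eigState, Matrix.mul_smul, Matrix.mul_add, Matrix.mul_one, trace_smul, trace_add,
    trace_pauli, trace_pauli_mul_pauli, smul_eq_mul]
  split_ifs <;> ring

theorem sum_trace_pauli_mul_smul_eigState (c : Fin 4) :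
    ∑ q : Bool × Fin 3, (pauli c * eigState q).trace • eigState q
      = (if c = 0 then 3 else 1 : ℂ) • pauli c := by
  simp only [Fintype.sum_prod_type, Fintype.sum_bool, Fin.sum_univ_three, trace_pauli_mul_eigState]
  fin_cases c <;> simp [eigState, Fin.succ] <;> module

theorem pauliString_eq_piKronecker {n : ℕ} (a : Fin n → Fin 4) :
    PauliString a = piKronecker fun j => pauli (a j) := rfl

theorem prodEigState_eq_piKronecker {n : ℕ} (f : Fin n → Bool × Fin 3) :
    prodEigState f = piKronecker fun j => eigState (f j) := rfl

theorem pweight_le {n : ℕ} (a : Fin n → Fin 4) : pweight a ≤ n :=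
  (Finset.card_filter_le _ _).trans_eq (Finset.card_fin n)

theorem prod_ite_eq_zero_eq_pow {M : Type*} [CommMonoid M] {n : ℕ} (a : Fin n → Fin 4) (x : M) :
    ∏ j, (if a j = 0 then x else 1) = x ^ (n - pweight a) := by
  have hcard := Finset.card_filter_add_card_filter_not (s := Finset.univ) fun j => a j ≠ 0
  simp only [not_not, Finset.card_univ, Fintype.card_fin] at hcard
  rw [← Finset.prod_filter, Finset.prod_const, pweight]
  congr 1
  omega

theorem sum_trace_pauliString_mul_smul_prodEigState {n : ℕ} (a : Fin n → Fin 4) :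
    ∑ f : Fin n → Bool × Fin 3, (PauliString a * prodEigState f).trace • prodEigState f
      = (3 : ℂ) ^ (n - pweight a) • PauliString a := by
  simp only [pauliString_eq_piKronecker, prodEigState_eq_piKronecker, trace_piKronecker_mul,
    sum_smul_piKronecker fun j q => (pauli (a j) * eigState q).trace,
    sum_trace_pauli_mul_smul_eigState, piKronecker_smul, prod_ite_eq_zero_eq_pow]

/-- Generalized coefficient-estimation identity (Lemma 16 of Huang–Chen–Preskill, used in
Appendix E): the classical-shadow average recovers the Pauli-basis matrix element
`2^{-n} tr(P_b ℰ(P_a))` of any linear map `ℰ`, scaled by `(1/3)^|a|`. -/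
theorem coefficient_estimation {n : ℕ}
    (E : Matrix (Fin n → Fin 2) (Fin n → Fin 2) ℂ →ₗ[ℂ]
          Matrix (Fin n → Fin 2) (Fin n → Fin 2) ℂ)
    (a b : Fin n → Fin 4) :
    ((6 : ℂ) ^ n)⁻¹ * ∑ f : Fin n → Bool × Fin 3,
        (PauliString b * E (prodEigState f)).trace * (PauliString a * prodEigState f).trace
      = (1 / 3 : ℂ) ^ pweight a * ((2 : ℂ) ^ n)⁻¹ *
          (PauliString b * E (PauliString a)).trace := by
  have linearity : ∑ f : Fin n → Bool × Fin 3,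
        (PauliString b * E (prodEigState f)).trace * (PauliString a * prodEigState f).trace
      = (PauliString b * E (∑ f : Fin n → Bool × Fin 3,
          (PauliString a * prodEigState f).trace • prodEigState f)).trace := by
    simp only [map_sum, map_smul, Matrix.mul_sum, Matrix.mul_smul, trace_sum, trace_smul,
      smul_eq_mul, mul_comm]
  rw [linearity, sum_trace_pauliString_mul_smul_prodEigState, map_smul, Matrix.mul_smul,
    trace_smul, smul_eq_mul, pow_sub₀ _ three_ne_zero (pweight_le a),
    show (6 : ℂ) = 2 * 3 by norm_num, mul_pow, one_div, inv_pow]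
  field_simp
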